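/- With the definitions of the (n+1)-dimensional black brane thermodynamics (single rotation parameter), the Gibbs free energy defined by G = I/β with Euclidean action I = −(βV/16π)·(r₊^{2n−2}+q²ℓ²)/(r₊^{n−2}ℓ²) satisfies the Legendre-transform identity G = M − TS − ΩJ − ΦQ, as an identity among explicit functions of (r₊, a, q). -/

import Mathlib

noncomputable def Xi (ℓ a : ℝ) : ℝ := Real.sqrt (1 + a ^ 2 / ℓ ^ 2)

noncomputable def mMass (n : ℕ) (ℓ r q : ℝ) : ℝ := r ^ n / ℓ ^ 2 + q ^ 2 / r ^ (n - 2)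

noncomputable def Mmass (n : ℕ) (ℓ V r a q : ℝ) : ℝ :=
  V / (16 * Real.pi) * mMass n ℓ r q * ((n : ℝ) * (Xi ℓ a) ^ 2 - 1)

noncomputable def Sent (n : ℕ) (ℓ V r a : ℝ) : ℝ := Xi ℓ a * V / 4 * r ^ (n - 1)

noncomputable def Jang (n : ℕ) (ℓ V r a q : ℝ) : ℝ :=
  V / (16 * Real.pi) * (n : ℝ) * Xi ℓ a * mMass n ℓ r q * a

noncomputable def Qch (n : ℕ) (ℓ V a q : ℝ) : ℝ :=
  Xi ℓ a * V / (4 * Real.pi) * Real.sqrt (((n : ℝ) - 1) * ((n : ℝ) - 2) / 2) * q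

noncomputable def Temp (n : ℕ) (ℓ r a q : ℝ) : ℝ :=
  ((n : ℝ) * r ^ (2 * n - 2) - ((n : ℝ) - 2) * q ^ 2 * ℓ ^ 2) /
    (4 * Real.pi * ℓ ^ 2 * Xi ℓ a * r ^ (2 * n - 3))

noncomputable def Omg (ℓ a : ℝ) : ℝ := a / (Xi ℓ a * ℓ ^ 2)

noncomputable def Pot (n : ℕ) (ℓ r a q : ℝ) : ℝ :=
  Real.sqrt (((n : ℝ) - 1) / (2 * ((n : ℝ) - 2))) * q / (Xi ℓ a * r ^ (n - 2))

/-!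
Each of the products `T S`, `Ω J` and `Φ Q` is free of `Ξ`, and since `Ξ² = 1 + a²/ℓ²` the
rotational term `Ω J` cancels the `a`-dependence of `M`, leaving `M - Ω J = V (n-1) m / 16π`.
What remains is an identity between rational functions of `r₊`, `q`, `ℓ`, with
`r₊^{2n-2} = r₊ⁿ r₊^{n-2}`.
-/

theorem Xi_sq (ℓ a : ℝ) : Xi ℓ a ^ 2 = 1 + a ^ 2 / ℓ ^ 2 :=
  Real.sq_sqrt (by positivity)

theorem Xi_pos (ℓ a : ℝ) : 0 < Xi ℓ a :=
  Real.sqrt_pos.2 (by positivity)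

theorem Mmass_sub_Omg_mul_Jang (n : ℕ) (ℓ V r a q : ℝ) :
    Mmass n ℓ V r a q - Omg ℓ a * Jang n ℓ V r a q =
      V / (16 * Real.pi) * ((n : ℝ) - 1) * mMass n ℓ r q := by
  have hΞ := (Xi_pos ℓ a).ne'
  unfold Mmass Omg Jang
  rw [Xi_sq]
  field_simp
  ring

theorem Temp_mul_Sent {n : ℕ} (hn : 2 ≤ n) (ℓ V : ℝ) {r : ℝ} (hr : r ≠ 0) (a q : ℝ) :
    Temp n ℓ r a q * Sent n ℓ V r a =
      V * ((n : ℝ) * r ^ (2 * n - 2) - ((n : ℝ) - 2) * q ^ 2 * ℓ ^ 2) /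
        (16 * Real.pi * ℓ ^ 2 * r ^ (n - 2)) := by
  have hΞ := (Xi_pos ℓ a).ne'
  have hpow : r ^ (2 * n - 3) = r ^ (n - 1) * r ^ (n - 2) := by
    rw [← pow_add]; congr 1; omega
  unfold Temp Sent
  rw [hpow]
  field_simp
  ring

theorem sqrt_mul_sqrt_eq_sub_one_div_two {x : ℝ} (hx : 2 < x) :
    Real.sqrt ((x - 1) / (2 * (x - 2))) * Real.sqrt ((x - 1) * (x - 2) / 2) = (x - 1) / 2 := by
  have hx2 : x - 2 ≠ 0 := by linarith
  rw [← Real.sqrt_mul (div_nonneg (by linarith) (by linarith)),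
    show (x - 1) / (2 * (x - 2)) * ((x - 1) * (x - 2) / 2) = ((x - 1) / 2) ^ 2 by
      field_simp]
  exact Real.sqrt_sq (by linarith)

theorem Pot_mul_Qch {n : ℕ} (hn : 3 ≤ n) (ℓ V r a q : ℝ) :
    Pot n ℓ r a q * Qch n ℓ V a q = V * ((n : ℝ) - 1) * q ^ 2 / (8 * Real.pi * r ^ (n - 2)) := by
  have hΞ := (Xi_pos ℓ a).ne'
  have hsqrt := sqrt_mul_sqrt_eq_sub_one_div_two (x := n) (by exact_mod_cast hn)
  unfold Pot Qch
  calc _ = (Real.sqrt (((n : ℝ) - 1) / (2 * ((n : ℝ) - 2))) *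
          Real.sqrt (((n : ℝ) - 1) * ((n : ℝ) - 2) / 2)) * V * q ^ 2 /
            (4 * Real.pi * r ^ (n - 2)) := by field_simp
    _ = _ := by rw [hsqrt]; field_simp; ring

theorem black_brane_gibbs_legendre_general
    (n : ℕ) (hn : 3 ≤ n) (ℓ V rp a q : ℝ)
    (hℓ : 0 < ℓ) (hrp : 0 < rp) :
    -(V / (16 * Real.pi)) * (rp ^ (2 * n - 2) + q ^ 2 * ℓ ^ 2) / (rp ^ (n - 2) * ℓ ^ 2) =
      Mmass n ℓ V rp a q - Temp n ℓ rp a q * Sent n ℓ V rp a -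
        Omg ℓ a * Jang n ℓ V rp a q - Pot n ℓ rp a q * Qch n ℓ V a q := by
  have hpow : rp ^ (2 * n - 2) = rp ^ n * rp ^ (n - 2) := by
    rw [← pow_add]; congr 1; omega
  have hℓ0 := hℓ.ne'
  have hrp0 := hrp.ne'
  rw [sub_right_comm (Mmass n ℓ V rp a q), Mmass_sub_Omg_mul_Jang,
    Temp_mul_Sent (by omega) ℓ V hrp0, Pot_mul_Qch hn, hpow]
  unfold mMass
  field_simp
  ring

/-- the Gibbs free energy G = I/β, with Euclidean action
I = −(βV/16π)·(r₊^{2n−2}+q²ℓ²)/(r₊^{n−2}ℓ²), satisfies the Legendre-transform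
identity G = M − TS − ΩJ − ΦQ as an identity among the explicit functions of
(r₊, a, q). -/
theorem black_brane_gibbs_legendre
    (n : ℕ) (hn : 3 ≤ n) (ℓ V rp a q : ℝ)
    (hℓ : 0 < ℓ) (hV : 0 < V) (hrp : 0 < rp)
    (hT : 0 < Temp n ℓ rp a q) :
    -(V / (16 * Real.pi)) * (rp ^ (2 * n - 2) + q ^ 2 * ℓ ^ 2) / (rp ^ (n - 2) * ℓ ^ 2) =
      Mmass n ℓ V rp a q - Temp n ℓ rp a q * Sent n ℓ V rp a -
        Omg ℓ a * Jang n ℓ V rp a q - Pot n ℓ rp a q * Qch n ℓ V a q :=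
  black_brane_gibbs_legendre_general n hn ℓ V rp a q hℓ hrp
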